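/- Let G be a finite graph and q ≥ 1. For the Potts partition function with constant coupling J and constant field H on spin 1 (Hamiltonian h(σ) = −J Σ_{{i,j}∈E} δ(σ_i,σ_j) − H Σ_i δ(1,σ_i)), Z(G) = Σ_{π∈P(G)} (∏_{i=1}^{k(π)} (e^{βH|π_i|} + q − 1)) · ∏_{K∈C(π)} [q^1] Z_zero(K; q, e^{βJ}−1), where P(G) is the set of connected partitions of V(G), |π_i| is the size of the i-th block, C(π) the induced subgraphs, and [q^1] Z_zero(K;q,v) is the coefficient of q in Σ_{A⊆E(K)} q^{k(A)} v^{|A|}. -/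

import Mathlib

open scoped Classical
open Finset

structure MGraph (V E : Type) where
  ends : E → Sym2 V

namespace MGraph

variable {V E S R : Type} [Fintype V] [Fintype E]

/-- Two vertices are joined by an edge of `A`. -/
def adjRel (G : MGraph V E) (A : Finset E) (u v : V) : Prop :=
  ∃ e ∈ A, G.ends e = s(u, v)

/-- The setoid on vertices whose classes are the connected components of the
spanning subgraph `(V, A)`. -/
def compSetoid (G : MGraph V E) (A : Finset E) : Setoid V :=
  ⟨Relation.EqvGen (G.adjRel A), Relation.EqvGen.is_equivalence _⟩

/-- The connected components of the spanning subgraph `(V, A)`. -/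
def Comp (G : MGraph V E) (A : Finset E) : Type := Quotient (G.compSetoid A)

noncomputable instance (G : MGraph V E) (A : Finset E) : Fintype (G.Comp A) :=
  @Quotient.fintype V _ (G.compSetoid A) (Classical.decRel _)

/-- `k(A)`: the number of connected components of the spanning subgraph `(V, A)`. -/
noncomputable def kA (G : MGraph V E) (A : Finset E) : ℕ := Nat.card (G.Comp A)

/-- `u` and `v` are connected in the spanning subgraph `(V, A)`. -/
def Connects (G : MGraph V E) (A : Finset E) (u v : V) : Prop :=
  Relation.EqvGen (G.adjRel A) u v

/-- The endpoints of `e` are connected in the spanning subgraph `(V, A)`. -/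
def EndsConnected (G : MGraph V E) (A : Finset E) (e : E) : Prop :=
  ∃ u v, G.ends e = s(u, v) ∧ G.Connects A u v

def IsLoop (G : MGraph V E) (e : E) : Prop := (G.ends e).IsDiag

/-- `(V, A)` is a forest (acyclic spanning subgraph): every edge of `A` is a bridge of it. -/
def IsForest (G : MGraph V E) (A : Finset E) : Prop :=
  ∀ e ∈ A, ¬ G.EndsConnected (A.erase e) e

/-- All vertices are pairwise connected using edges of `A`. -/
def ConnectsAll (G : MGraph V E) (A : Finset E) : Prop := ∀ u v, G.Connects A u v

/-- A maximal spanning forest: a forest restricting to a spanning tree of each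
connected component of `G`. -/
def IsSpanningTree (G : MGraph V E) (T : Finset E) : Prop :=
  G.IsForest T ∧ ∀ u v, G.Connects T u v ↔ G.Connects Finset.univ u v

/-- `e ∈ T` is internally active: `e` is minimal in the cut
`{f : (T - e) ∪ {f} ∈ 𝒯(G)}`. -/
def IntActive [LinearOrder E] (G : MGraph V E) (T : Finset E) (e : E) : Prop :=
  e ∈ T ∧ ∀ f, G.IsSpanningTree (insert f (T.erase e)) → e ≤ f

/-- The edge set of the unique cycle of `T ∪ {e}` (when it exists):
`e` together with those `f ∈ T` whose removal disconnects the ends of `e`. -/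
noncomputable def cycleEdges (G : MGraph V E) (T : Finset E) (e : E) : Finset E :=
  insert e (T.filter fun f => ¬ G.EndsConnected (T.erase f) e)

/-- `e ∉ T` is externally active: `T ∪ {e}` contains a cycle through `e` and
`e` is the minimal edge of that cycle. -/
def ExtActive [LinearOrder E] (G : MGraph V E) (T : Finset E) (e : E) : Prop :=
  e ∉ T ∧ G.EndsConnected T e ∧ ∀ f ∈ G.cycleEdges T e, e ≤ f

/-- The vertex set of the component `c` of `(V, A)`. -/
noncomputable def compVerts (G : MGraph V E) (A : Finset E) (c : G.Comp A) : Finset V :=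
  Finset.univ.filter fun v => (Quotient.mk (G.compSetoid A) v) = c

/-- The total vertex weight of the component `c` of `(V, A)`. -/
noncomputable def compWeight [AddCommMonoid S] (G : MGraph V E) (A : Finset E)
    (ω : V → S) (c : G.Comp A) : S :=
  ∑ v ∈ G.compVerts A c, ω v

/-- The V-polynomial, defined by its state sum. -/
noncomputable def Vpoly [AddCommMonoid S] [CommRing R] (G : MGraph V E)
    (ω : V → S) (γ : E → R) : MvPolynomial S R :=
  ∑ A : Finset E, (∏ c : G.Comp A, MvPolynomial.X (G.compWeight A ω c)) *
    MvPolynomial.C (∏ e ∈ A, γ e)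

/-- The multivariate Tutte polynomial `Z_T(G; q, γ)` as a polynomial in `q`. -/
noncomputable def ZT [CommRing R] (G : MGraph V E) (γ : E → R) : Polynomial R :=
  ∑ A : Finset E, Polynomial.X ^ (G.kA A) * Polynomial.C (∏ e ∈ A, γ e)

/-- Deletion of the edge `e`. -/
def del (G : MGraph V E) (e : E) : MGraph V {f : E // f ≠ e} := ⟨fun f => G.ends f.1⟩

/-- Contraction of the edge `e`: vertices are the components of `(V, {e})`. -/
noncomputable def contract (G : MGraph V E) (e : E) : MGraph (G.Comp {e}) {f : E // f ≠ e} :=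
  ⟨fun f => (G.ends f.1).map (Quotient.mk (G.compSetoid {e}))⟩

/-- The forest `T` with the edges of `B` contracted: vertices are the components
of `(V, B)` and edges are `T \ B`. -/
noncomputable def contractIn (G : MGraph V E) (T B : Finset E) :
    MGraph (G.Comp B) ↥(T \ B : Finset E) :=
  ⟨fun f => (G.ends f.1).map (Quotient.mk (G.compSetoid B))⟩

/-- The edges of `G` with both ends inside `P`. -/
noncomputable def edgesIn (G : MGraph V E) (P : Finset V) : Finset E :=
  Finset.univ.filter fun e => ∀ v ∈ G.ends e, v ∈ P

/-- The subgraph of `G` induced by the vertex set `P`. -/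
noncomputable def induce (G : MGraph V E) (P : Finset V) : MGraph ↥P ↥(G.edgesIn P) :=
  ⟨fun e => (G.ends e.1).pmap (fun v hv => (⟨v, hv⟩ : ↥P))
    (by have he := e.2; simp only [edgesIn, Finset.mem_filter] at he; exact he.2)⟩

/-- The block `B` induces a connected subgraph of `G`. -/
def BlockConnected (G : MGraph V E) (B : Finset V) : Prop :=
  ∀ u ∈ B, ∀ v ∈ B, Relation.EqvGen (G.adjRel (G.edgesIn B)) u v

/-- A connected partition of `V(G)`: every vertex lies in exactly one block,
blocks are nonempty, and each block induces a connected subgraph. -/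
def IsConnectedPartition (G : MGraph V E) (P : Finset (Finset V)) : Prop :=
  (∀ B ∈ P, B.Nonempty) ∧ (∀ v : V, ∃! B, B ∈ P ∧ v ∈ B) ∧ ∀ B ∈ P, G.BlockConnected B

/-- The partition `Π(A)` of `V(G)` into the components of `(V, A)`. -/
noncomputable def partitionOf (G : MGraph V E) (A : Finset E) : Finset (Finset V) :=
  Finset.univ.image fun c : G.Comp A => G.compVerts A c

/-- The internally inactive edges of the spanning tree `T`. -/
noncomputable def intInactives [LinearOrder E] (G : MGraph V E) (T : Finset E) : Finset E :=
  T.filter fun e => ¬ G.IntActive T e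

/-- The internally active edges of the spanning tree `T`. -/
noncomputable def intActives [LinearOrder E] (G : MGraph V E) (T : Finset E) : Finset E :=
  T.filter fun e => G.IntActive T e

/-- The externally active edges w.r.t. the spanning tree / forest `T`. -/
noncomputable def extActives [LinearOrder E] (G : MGraph V E) (T : Finset E) : Finset E :=
  Finset.univ.filter fun e => G.ExtActive T e

/-- Kronecker delta `δ(σ_i, σ_j)` for the two ends of the edge `e`. -/
noncomputable def edgeDelta (G : MGraph V E) {q : ℕ} (σ : V → Fin q) (e : E) : ℂ :=
  Sym2.lift ⟨fun u v => if σ u = σ v then 1 else 0, fun u v => by simp [eq_comm]⟩ (G.ends e)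

/-- The Potts partition function with variable interactions `J` and
field vectors `M`. -/
noncomputable def Zext (G : MGraph V E) (q : ℕ) (β : ℂ) (J : E → ℂ) (M : V → Fin q → ℂ) : ℂ :=
  ∑ σ : V → Fin q, Complex.exp (β * ((∑ e : E, J e * G.edgeDelta σ e) +
    ∑ v : V, ∑ α : Fin q, M v α * (if α = σ v then 1 else 0)))

/-- The Potts partition function with constant interaction `J` and constant
field `H` favouring the first spin. -/
noncomputable def ZconstField (G : MGraph V E) (q : ℕ) (β J H : ℂ) : ℂ :=
  ∑ σ : V → Fin q, Complex.exp (β * (J * (∑ e : E, G.edgeDelta σ e) +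
    H * ∑ v : V, (if (σ v : ℕ) = 0 then (1 : ℂ) else 0)))

/-- The zero-field Potts partition function with constant interaction `J`. -/
noncomputable def Zzero (G : MGraph V E) (q : ℕ) (β J : ℂ) : ℂ :=
  ∑ σ : V → Fin q, Complex.exp (β * J * ∑ e : E, G.edgeDelta σ e)

end MGraph

/-!
Since `exp (β J δ) = 1 + (e^{βJ} - 1) δ` for `δ ∈ {0, 1}`, expanding the product over the edges
writes `Z(G)` as a sum over edge sets `A` of `(e^{βJ} - 1)^{|A|}` times a sum over the spin
configurations that are constant on the components of `(V, A)`; that sum factors over the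
components, a component `c` contributing `e^{βH|c|} + q - 1`. Grouping the edge sets by their
partition `Π(A)` into components, which is a connected partition `π`, the edge sets with
`Π(A) = π` are exactly the disjoint unions of spanning connected edge sets of the induced subgraphs
`G[B]`, `B ∈ π`, and `[q^1] Z_zero(K; q, v)` is the sum of `v^{|T|}` over the spanning connected
edge sets `T` of `K`.
-/

namespace Relation

variable {α β : Type*} {r : α → α → Prop}

theorem EqvGen.restrict {p : α → Prop} (hp : ∀ a b, r a b → (p a ↔ p b)) {a b : α}
    (h : EqvGen r a b) :
    (p a ↔ p b) ∧ (p a → EqvGen (fun x y => r x y ∧ p x ∧ p y) a b) := by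
  induction h with
  | rel a b hab => exact ⟨hp a b hab, fun ha => .rel _ _ ⟨hab, ha, (hp a b hab).1 ha⟩⟩
  | refl a => exact ⟨Iff.rfl, fun _ => .refl _⟩
  | symm a b _ ih => exact ⟨ih.1.symm, fun hb => .symm _ _ (ih.2 (ih.1.2 hb))⟩
  | trans a b c _ _ ih₁ ih₂ =>
    exact ⟨ih₁.1.trans ih₂.1, fun ha => .trans _ _ _ (ih₁.2 ha) (ih₂.2 (ih₁.1.1 ha))⟩

theorem eqvGen_map_iff {f : α → β} (hf : Function.Injective f) {a b : α} :
    EqvGen (Relation.Map r f f) (f a) (f b) ↔ EqvGen r a b := by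
  refine ⟨fun h => ?_, fun h => ?_⟩
  · have key : ∀ c d, EqvGen (Relation.Map r f f) c d →
        c = d ∨ ∃ a b, f a = c ∧ f b = d ∧ EqvGen r a b := by
      intro c d h
      induction h with
      | rel c d hcd =>
        obtain ⟨a, b, hab, rfl, rfl⟩ := hcd
        exact .inr ⟨a, b, rfl, rfl, .rel _ _ hab⟩
      | refl => exact .inl rfl
      | symm c d _ ih =>
        rcases ih with rfl | ⟨a, b, rfl, rfl, h⟩
        · exact .inl rfl
        · exact .inr ⟨b, a, rfl, rfl, .symm _ _ h⟩
      | trans c d e _ _ ih₁ ih₂ =>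
        rcases ih₁ with rfl | ⟨a, b, rfl, rfl, h₁⟩
        · exact ih₂
        rcases ih₂ with h | ⟨b', c, hb, rfl, h₂⟩
        · exact .inr ⟨a, b, rfl, h, h₁⟩
        · exact .inr ⟨a, c, rfl, rfl, .trans _ _ _ h₁ (hf hb ▸ h₂)⟩
    rcases key _ _ h with hab | ⟨a', b', ha, hb, h⟩
    · exact hf hab ▸ .refl a
    · exact hf ha ▸ hf hb ▸ h
  · induction h with
    | rel a b hab => exact .rel _ _ ⟨a, b, hab, rfl, rfl⟩
    | refl => exact .refl _
    | symm _ _ _ ih => exact .symm _ _ ih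
    | trans _ _ _ _ _ ih₁ ih₂ => exact .trans _ _ _ ih₁ ih₂

end Relation

theorem Fintype.sum_comp_eq_sum_filter {α β κ M : Type*} [Fintype α] [Fintype β] [Fintype κ]
    [AddCommMonoid M] {π : α → κ} (hπ : Function.Surjective π) (F : (α → β) → M) :
    ∑ τ : κ → β, F (τ ∘ π) =
      ∑ σ ∈ univ.filter (fun σ : α → β => ∀ a b, π a = π b → σ a = σ b), F σ := by
  refine sum_nbij' (· ∘ π) (· ∘ Function.surjInv hπ)
    (fun τ _ => mem_filter.2 ⟨mem_univ _, fun a b hab => congrArg τ hab⟩)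
    (fun _ _ => mem_univ _) (fun τ _ => funext fun c => ?_) (fun σ hσ => funext fun a => ?_)
    (fun _ _ => rfl)
  · exact congrArg τ (Function.surjInv_eq hπ c)
  · exact (mem_filter.1 hσ).2 _ _ (Function.surjInv_eq hπ (π a))

theorem Fin.sum_ite_val_eq_zero {R : Type*} [Ring R] {q : ℕ} (hq : 1 ≤ q) (a : R) :
    ∑ α : Fin q, (if (α : ℕ) = 0 then a else 1) = a + q - 1 := by
  obtain ⟨n, rfl⟩ := Nat.exists_eq_add_of_le' hq
  simp [Fin.sum_univ_succ]
  abel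

namespace MGraph

variable {V E : Type} (G : MGraph V E)

theorem exists_ends_eq (e : E) : ∃ u v, G.ends e = s(u, v) := by
  induction G.ends e using Sym2.ind with
  | _ u v => exact ⟨u, v, rfl⟩

theorem connects_mono {A A' : Finset E} (h : A ⊆ A') {u v : V} (hc : G.Connects A u v) :
    G.Connects A' u v :=
  Relation.EqvGen.mono (fun _ _ ⟨e, he, hends⟩ => ⟨e, h he, hends⟩) _ _ hc

def compOf (A : Finset E) (v : V) : G.Comp A := Quotient.mk _ v

theorem compOf_surjective (A : Finset E) : Function.Surjective (G.compOf A) :=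
  Quotient.mk_surjective

theorem compOf_eq_iff {A : Finset E} {u v : V} :
    G.compOf A u = G.compOf A v ↔ G.Connects A u v :=
  Quotient.eq

theorem compOf_eq_of_adjRel {A : Finset E} {u v : V} (h : G.adjRel A u v) :
    G.compOf A u = G.compOf A v :=
  G.compOf_eq_iff.2 (.rel _ _ h)

theorem kA_eq_one_iff [Nonempty V] {A : Finset E} : G.kA A = 1 ↔ ∀ u v, G.Connects A u v := by
  rw [kA, Nat.card_eq_one_iff_unique, and_iff_left ⟨G.compOf A (Classical.arbitrary V)⟩,
    subsingleton_iff, (G.compOf_surjective A).forall₂]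
  simp_rw [compOf_eq_iff]

theorem edgeDelta_eq_ite {q : ℕ} (σ : V → Fin q) (e : E) :
    G.edgeDelta σ e = if ((G.ends e).map σ).IsDiag then 1 else 0 := by
  obtain ⟨u, v, huv⟩ := G.exists_ends_eq e
  simp [edgeDelta, huv]

theorem forall_isDiag_map_ends_iff {α : Type*} (σ : V → α) (A : Finset E) :
    (∀ e ∈ A, ((G.ends e).map σ).IsDiag) ↔ ∀ u v, G.Connects A u v → σ u = σ v := by
  refine ⟨fun h u v huv => ?_, fun h e he => ?_⟩
  · refine congrArg (Quot.lift σ fun a b ⟨e, he, hab⟩ => ?_) (Quot.eqvGen_sound huv)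
    simpa [hab] using h e he
  · obtain ⟨u, v, huv⟩ := G.exists_ends_eq e
    simpa [huv] using h u v (.rel _ _ ⟨e, he, huv⟩)

theorem prod_edgeDelta {q : ℕ} (σ : V → Fin q) (A : Finset E) :
    ∏ e ∈ A, G.edgeDelta σ e = if ∀ u v, G.Connects A u v → σ u = σ v then 1 else 0 := by
  simp_rw [G.edgeDelta_eq_ite, prod_boole, G.forall_isDiag_map_ends_iff]

theorem exp_mul_sum_edgeDelta [Fintype E] {q : ℕ} (σ : V → Fin q) (x : ℂ) :
    Complex.exp (x * ∑ e, G.edgeDelta σ e) =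
      ∑ A : Finset E, (Complex.exp x - 1) ^ #A * ∏ e ∈ A, G.edgeDelta σ e := by
  have h (e : E) :
      Complex.exp (x * G.edgeDelta σ e) = 1 + (Complex.exp x - 1) * G.edgeDelta σ e := by
    rw [edgeDelta_eq_ite]; split_ifs <;> simp
  simp_rw [mul_sum, Complex.exp_sum, h, prod_one_add, powerset_univ, prod_mul_distrib, prod_const]

section Components

variable [Fintype V]

theorem mem_compVerts {A : Finset E} {c : G.Comp A} {v : V} :
    v ∈ G.compVerts A c ↔ G.compOf A v = c := by
  rw [compVerts, mem_filter]
  exact and_iff_right (mem_univ v)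

theorem compVerts_injective (A : Finset E) : Function.Injective (G.compVerts A) := by
  intro c c' h
  obtain ⟨v, rfl⟩ := G.compOf_surjective A c
  have hv : v ∈ G.compVerts A (G.compOf A v) := G.mem_compVerts.2 rfl
  rwa [h, mem_compVerts] at hv

theorem sum_prod_edgeDelta_mul {q : ℕ} (A : Finset E) (F : (V → Fin q) → ℂ) :
    ∑ σ : V → Fin q, (∏ e ∈ A, G.edgeDelta σ e) * F σ =
      ∑ τ : G.Comp A → Fin q, F (τ ∘ G.compOf A) := by
  rw [Fintype.sum_comp_eq_sum_filter (G.compOf_surjective A), sum_filter]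
  refine sum_congr rfl fun σ _ => ?_
  simp_rw [G.prod_edgeDelta, G.compOf_eq_iff]
  split_ifs <;> simp

theorem sum_exp_field_comp_eq_prod {q : ℕ} (hq : 1 ≤ q) (A : Finset E) (x : ℂ) :
    ∑ τ : G.Comp A → Fin q,
        Complex.exp (x * ∑ v, if ((τ ∘ G.compOf A) v : ℕ) = 0 then 1 else 0) =
      ∏ c : G.Comp A, (Complex.exp (x * #(G.compVerts A c)) + q - 1) := by
  have h (τ : G.Comp A → Fin q) :
      Complex.exp (x * ∑ v, if ((τ ∘ G.compOf A) v : ℕ) = 0 then 1 else 0) =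
        ∏ c, if (τ c : ℕ) = 0 then Complex.exp (x * #(G.compVerts A c)) else 1 := by
    rw [mul_sum, Complex.exp_sum, ← prod_fiberwise univ (G.compOf A)]
    refine prod_congr rfl fun c _ => ?_
    rw [prod_congr rfl fun v hv => by rw [Function.comp_apply, (mem_filter.1 hv).2], prod_const]
    change _ ^ #(G.compVerts A c) = _
    split_ifs <;> simp [← Complex.exp_nat_mul, mul_comm]
  simp_rw [sum_congr rfl fun τ _ => h τ, ← Fin.sum_ite_val_eq_zero hq, prod_univ_sum,
    Fintype.piFinset_univ]

end Components

variable [Fintype V] [Fintype E]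

theorem ZconstField_eq_sum_partitionOf {q : ℕ} (hq : 1 ≤ q) (β J H : ℂ) :
    G.ZconstField q β J H = ∑ A : Finset E,
      (∏ B ∈ G.partitionOf A, (Complex.exp (β * H * #B) + q - 1)) *
        (Complex.exp (β * J) - 1) ^ #A := by
  have hsplit (σ : V → Fin q) :
      Complex.exp (β * (J * ∑ e, G.edgeDelta σ e + H * ∑ v, if (σ v : ℕ) = 0 then 1 else 0)) =
        ∑ A : Finset E, (Complex.exp (β * J) - 1) ^ #A * ((∏ e ∈ A, G.edgeDelta σ e) *
          Complex.exp (β * H * ∑ v, if (σ v : ℕ) = 0 then 1 else 0)) := by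
    rw [mul_add, Complex.exp_add, ← mul_assoc, ← mul_assoc, G.exp_mul_sum_edgeDelta, sum_mul]
    simp_rw [mul_assoc]
  rw [ZconstField, sum_congr rfl fun σ _ => hsplit σ, sum_comm]
  refine sum_congr rfl fun A _ => ?_
  rw [← mul_sum, G.sum_prod_edgeDelta_mul, G.sum_exp_field_comp_eq_prod hq, partitionOf,
    prod_image fun c _ c' _ h => G.compVerts_injective A h, mul_comm]

theorem mem_edgesIn_of_ends_eq {B : Finset V} {e : E} {u v : V} (h : G.ends e = s(u, v)) :
    e ∈ G.edgesIn B ↔ u ∈ B ∧ v ∈ B := by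
  simp [edgesIn, h]

theorem eq_of_mem_edgesIn {P : Finset (Finset V)} (hP : ∀ v, ∃! B, B ∈ P ∧ v ∈ B)
    {B B' : Finset V} (hB : B ∈ P) (hB' : B' ∈ P) {e : E} (he : e ∈ G.edgesIn B)
    (he' : e ∈ G.edgesIn B') : B = B' := by
  obtain ⟨u, v, huv⟩ := G.exists_ends_eq e
  exact (hP u).unique ⟨hB, ((G.mem_edgesIn_of_ends_eq huv).1 he).1⟩
    ⟨hB', ((G.mem_edgesIn_of_ends_eq huv).1 he').1⟩

theorem connects_inter_edgesIn {A : Finset E} {B : Finset V}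
    (hB : ∀ u v, G.adjRel A u v → (u ∈ B ↔ v ∈ B)) {u v : V} (h : G.Connects A u v)
    (hu : u ∈ B) : G.Connects (A ∩ G.edgesIn B) u v :=
  Relation.EqvGen.mono (fun _ _ ⟨⟨e, he, hxy⟩, hx, hy⟩ =>
      ⟨e, mem_inter.2 ⟨he, (G.mem_edgesIn_of_ends_eq hxy).2 ⟨hx, hy⟩⟩, hxy⟩)
    _ _ ((h.restrict hB).2 hu)

theorem exists_mem_partitionOf_mem_edgesIn {A : Finset E} {e : E} (he : e ∈ A) :
    ∃ B ∈ G.partitionOf A, e ∈ G.edgesIn B := by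
  obtain ⟨u, v, huv⟩ := G.exists_ends_eq e
  refine ⟨_, mem_image_of_mem _ (mem_univ (G.compOf A u)),
    (G.mem_edgesIn_of_ends_eq huv).2 ⟨?_, ?_⟩⟩ <;>
    simp only [mem_compVerts, G.compOf_eq_of_adjRel ⟨e, he, huv⟩]

theorem connects_inter_edgesIn_of_mem_partitionOf {A : Finset E} {B : Finset V}
    (hB : B ∈ G.partitionOf A) {u v : V} (hu : u ∈ B) (hv : v ∈ B) :
    G.Connects (A ∩ G.edgesIn B) u v := by
  obtain ⟨c, -, rfl⟩ := mem_image.1 hB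
  rw [mem_compVerts] at hu hv
  refine G.connects_inter_edgesIn (fun x y hxy => ?_) (G.compOf_eq_iff.1 (hu.trans hv.symm))
    (G.mem_compVerts.2 hu)
  simp only [mem_compVerts, G.compOf_eq_of_adjRel hxy]

theorem isConnectedPartition_partitionOf (A : Finset E) :
    G.IsConnectedPartition (G.partitionOf A) := by
  refine ⟨fun B hB => ?_, fun v => ⟨_, ⟨mem_image_of_mem _ (mem_univ (G.compOf A v)),
    G.mem_compVerts.2 rfl⟩, ?_⟩, fun B hB u hu v hv =>
    G.connects_mono inter_subset_right (G.connects_inter_edgesIn_of_mem_partitionOf hB hu hv)⟩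
  · obtain ⟨c, -, rfl⟩ := mem_image.1 hB
    obtain ⟨v, rfl⟩ := G.compOf_surjective A c
    exact ⟨v, G.mem_compVerts.2 rfl⟩
  · rintro _ ⟨hB, hv⟩
    obtain ⟨c, -, rfl⟩ := mem_image.1 hB
    rw [G.mem_compVerts.1 hv]

theorem partitionOf_eq {A : Finset E} {P : Finset (Finset V)} (hne : ∀ B ∈ P, B.Nonempty)
    (hP : ∀ v, ∃! B, B ∈ P ∧ v ∈ B) (hA : ∀ e ∈ A, ∃ B ∈ P, e ∈ G.edgesIn B)
    (hconn : ∀ B ∈ P, ∀ u ∈ B, ∀ v ∈ B, G.Connects A u v) : G.partitionOf A = P := by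
  have hblock : ∀ B ∈ P, ∀ v ∈ B, G.compVerts A (G.compOf A v) = B := by
    intro B hB v hv
    have hclosed : ∀ x y, G.adjRel A x y → (x ∈ B ↔ y ∈ B) := by
      rintro x y ⟨e, he, hxy⟩
      obtain ⟨B', hB', heB'⟩ := hA e he
      obtain ⟨hx, hy⟩ := (G.mem_edgesIn_of_ends_eq hxy).1 heB'
      constructor <;> intro h
      · rwa [(hP x).unique ⟨hB, h⟩ ⟨hB', hx⟩]
      · rwa [(hP y).unique ⟨hB, h⟩ ⟨hB', hy⟩]
    ext u
    rw [mem_compVerts, compOf_eq_iff]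
    exact ⟨fun h => (h.restrict hclosed).1.2 hv, fun hu => hconn B hB u hu v hv⟩
  ext B
  simp only [partitionOf, mem_image, mem_univ, true_and]
  constructor
  · rintro ⟨c, rfl⟩
    obtain ⟨v, rfl⟩ := G.compOf_surjective A c
    obtain ⟨B', ⟨hB', hv⟩, -⟩ := hP v
    rwa [hblock B' hB' v hv]
  · intro hB
    obtain ⟨v, hv⟩ := hne B hB
    exact ⟨_, hblock B hB v hv⟩

noncomputable def spanningConnectedSets (B : Finset V) : Finset (Finset E) :=
  (G.edgesIn B).powerset.filter fun t => ∀ u ∈ B, ∀ v ∈ B, G.Connects t u v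

theorem mem_spanningConnectedSets {B : Finset V} {t : Finset E} :
    t ∈ G.spanningConnectedSets B ↔ t ⊆ G.edgesIn B ∧ ∀ u ∈ B, ∀ v ∈ B, G.Connects t u v := by
  rw [spanningConnectedSets, mem_filter, mem_powerset]

theorem biUnion_inter_edgesIn {A : Finset E} {P : Finset (Finset V)} (hA : G.partitionOf A = P) :
    univ.biUnion (fun B : P => A ∩ G.edgesIn B) = A := by
  ext e
  simp only [mem_biUnion, mem_univ, true_and, mem_inter, Subtype.exists]
  refine ⟨fun ⟨_, _, he, _⟩ => he, fun he => ?_⟩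
  obtain ⟨B, hB, heB⟩ := G.exists_mem_partitionOf_mem_edgesIn he
  exact ⟨B, hA ▸ hB, he, heB⟩

theorem biUnion_inter_edgesIn_of_subset {P : Finset (Finset V)}
    (hP : ∀ v, ∃! B, B ∈ P ∧ v ∈ B) (t : P → Finset E) (ht : ∀ B, t B ⊆ G.edgesIn B) (B : P) :
    univ.biUnion t ∩ G.edgesIn B = t B := by
  ext e
  simp only [mem_inter, mem_biUnion, mem_univ, true_and]
  refine ⟨fun ⟨⟨B', he⟩, heB⟩ => ?_, fun he => ⟨⟨B, he⟩, ht B he⟩⟩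
  rwa [← Subtype.ext (G.eq_of_mem_edgesIn hP B'.2 B.2 (ht B' he) heB)]

theorem sum_pow_card_partitionOf_eq {R : Type*} [CommSemiring R] {P : Finset (Finset V)}
    (hne : ∀ B ∈ P, B.Nonempty) (hP : ∀ v, ∃! B, B ∈ P ∧ v ∈ B) (x : R) :
    ∑ A ∈ univ.filter (fun A : Finset E => G.partitionOf A = P), x ^ #A =
      ∏ B ∈ P, ∑ t ∈ G.spanningConnectedSets B, x ^ #t := by
  rw [← prod_coe_sort, prod_univ_sum]
  refine sum_nbij' (fun A B => A ∩ G.edgesIn B) (fun t => univ.biUnion t) (fun A hA => ?_)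
    (fun t ht => ?_) (fun A hA => G.biUnion_inter_edgesIn (mem_filter.1 hA).2)
    (fun t ht => ?_) (fun A hA => ?_)
  · have hB (B : P) : (B : Finset V) ∈ G.partitionOf A := by rw [(mem_filter.1 hA).2]; exact B.2
    exact Fintype.mem_piFinset.2 fun B => G.mem_spanningConnectedSets.2 ⟨inter_subset_right,
      fun u hu v hv => G.connects_inter_edgesIn_of_mem_partitionOf (hB B) hu hv⟩
  · have ht := fun B => G.mem_spanningConnectedSets.1 (Fintype.mem_piFinset.1 ht B)
    refine mem_filter.2 ⟨mem_univ _, G.partitionOf_eq hne hP (fun e he => ?_) fun B hB => ?_⟩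
    · obtain ⟨B, -, he⟩ := mem_biUnion.1 he
      exact ⟨B, B.2, (ht B).1 he⟩
    · exact fun u hu v hv => G.connects_mono (subset_biUnion_of_mem t (mem_univ ⟨B, hB⟩))
        ((ht ⟨B, hB⟩).2 u hu v hv)
  · exact funext (G.biUnion_inter_edgesIn_of_subset hP t fun B =>
      (G.mem_spanningConnectedSets.1 (Fintype.mem_piFinset.1 ht B)).1)
  · have hdisj : ((univ : Finset P) : Set P).PairwiseDisjoint fun B => A ∩ G.edgesIn B :=
      fun B _ B' _ hne => disjoint_left.2 fun e he he' => hne <| Subtype.ext <|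
        G.eq_of_mem_edgesIn hP B.2 B'.2 (mem_inter.1 he).2 (mem_inter.1 he').2
    rw [prod_pow_eq_pow_sum, ← card_biUnion hdisj, G.biUnion_inter_edgesIn (mem_filter.1 hA).2]

theorem map_val_ends_induce {B : Finset V} (e : G.edgesIn B) :
    ((G.induce B).ends e).map Subtype.val = G.ends e := by
  simp only [induce]
  generalize_proofs h
  revert h
  induction G.ends e using Sym2.ind
  intro h
  rfl

theorem adjRel_map_subtype {B : Finset V} (s : Finset (G.edgesIn B)) :
    G.adjRel (s.map (Function.Embedding.subtype _)) =
      Relation.Map ((G.induce B).adjRel s) Subtype.val Subtype.val := by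
  ext u v
  constructor
  · rintro ⟨_, he, huv⟩
    obtain ⟨e, hes, rfl⟩ := mem_map.1 he
    obtain ⟨x, y, hxy⟩ := (G.induce B).exists_ends_eq e
    have h := G.map_val_ends_induce e
    rw [Function.Embedding.subtype_apply] at huv
    rw [hxy, Sym2.map_mk, huv, Sym2.eq_iff] at h
    rcases h with ⟨rfl, rfl⟩ | ⟨rfl, rfl⟩
    · exact ⟨x, y, ⟨e, hes, hxy⟩, rfl, rfl⟩
    · exact ⟨y, x, ⟨e, hes, hxy.trans Sym2.eq_swap⟩, rfl, rfl⟩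
  · rintro ⟨x, y, ⟨e, hes, hxy⟩, rfl, rfl⟩
    exact ⟨e, mem_map_of_mem _ hes, by rw [← G.map_val_ends_induce, hxy, Sym2.map_mk]⟩

theorem connects_induce_iff {B : Finset V} {s : Finset (G.edgesIn B)} {x y : B} :
    (G.induce B).Connects s x y ↔ G.Connects (s.map (Function.Embedding.subtype _)) x y := by
  rw [Connects, Connects, adjRel_map_subtype, Relation.eqvGen_map_iff Subtype.val_injective]

theorem coeff_one_ZT_induce {R : Type} [CommRing R] {B : Finset V} (hB : B.Nonempty) (x : R) :
    ((G.induce B).ZT fun _ => x).coeff 1 = ∑ t ∈ G.spanningConnectedSets B, x ^ #t := by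
  have : Nonempty B := hB.to_subtype
  have hcoeff (s : Finset (G.edgesIn B)) :
      (Polynomial.X ^ (G.induce B).kA s * Polynomial.C (∏ _ ∈ s, x)).coeff 1 =
        if (G.induce B).kA s = 1 then x ^ #s else 0 := by
    rw [Polynomial.coeff_mul_C, Polynomial.coeff_X_pow, prod_const]
    split_ifs <;> simp_all [eq_comm]
  simp_rw [ZT, Polynomial.finsetSum_coeff, hcoeff, kA_eq_one_iff, connects_induce_iff]
  rw [← sum_filter]
  refine sum_nbij' (fun s => s.map (Function.Embedding.subtype _))
    (fun t => t.subtype (· ∈ G.edgesIn B)) (fun s hs => ?_) (fun t ht => ?_) (fun s _ => ?_)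
    (fun t ht => ?_) (fun s _ => by rw [card_map])
  · exact G.mem_spanningConnectedSets.2 ⟨fun e he => property_of_mem_map_subtype s he,
      fun u hu v hv => (mem_filter.1 hs).2 ⟨u, hu⟩ ⟨v, hv⟩⟩
  · have ht := G.mem_spanningConnectedSets.1 ht
    refine mem_filter.2 ⟨mem_univ _, fun u v => ?_⟩
    rw [subtype_map_of_mem ht.1]
    exact ht.2 u u.2 v v.2
  · ext e
    simp
  · exact subtype_map_of_mem (G.mem_spanningConnectedSets.1 ht).1

end MGraph

/-- Connected-partition expansion of the Potts partition function
with constant coupling `J` and constant field `H` favouring the first spin: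
`Z(G) = Σ_{π∈P(G)} (∏_i (e^{βH|π_i|}+q−1)) ∏_{K∈C(π)} [q^1] Z_zero(K;q,e^{βJ}−1)`. -/
theorem ZconstField_connected_partition_expansion {V E : Type} [Fintype V] [Fintype E]
    (G : MGraph V E) (q : ℕ) (hq : 1 ≤ q) (β J H : ℂ) :
    G.ZconstField q β J H =
      ∑ P ∈ Finset.univ.filter (fun P => G.IsConnectedPartition P),
        (∏ B ∈ P, (Complex.exp (β * H * (B.card : ℂ)) + (q : ℂ) - 1)) *
        ∏ B ∈ P, ((G.induce B).ZT (fun _ => Complex.exp (β * J) - 1)).coeff 1 := by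
  rw [G.ZconstField_eq_sum_partitionOf hq, ← sum_fiberwise_of_maps_to fun A _ =>
    mem_filter.2 ⟨mem_univ _, G.isConnectedPartition_partitionOf A⟩]
  refine sum_congr rfl fun P hP => ?_
  have hP := (mem_filter.1 hP).2
  rw [sum_congr rfl fun A hA => by rw [(mem_filter.1 hA).2], ← mul_sum,
    G.sum_pow_card_partitionOf_eq hP.1 hP.2.1,
    prod_congr rfl fun B hB => G.coeff_one_ZT_induce (hP.1 B hB) _]
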